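/- Let G = (V,E) be a finite undirected simple graph in which every vertex has positive degree, and let (i,j) ∈ E. For each vertex v let m_v be the uniform probability measure on the neighbors of v, and let W_1(m_i, m_j) denote the optimal transportation distance between m_i and m_j with respect to the shortest-path distance d of G, i.e., the infimum over couplings ξ of m_i and m_j of Σ_{(k,k')} d(k,k')·ξ(k,k'). Then W_1(m_i, m_j) ≥ 1 − T_ij · min{1/d_i, 1/d_j}, where T_ij is the number of common neighbors of i and j and d_i, d_j are the degrees of i and j. -/
import Mathlib


open Finset

/-- The uniform probability measure on the neighbors of `v`: mass `1/d_v` on each neighbor. -/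
noncomputable def uniformNbrMeasure {V : Type*} [Fintype V] [DecidableEq V]
    (G : SimpleGraph V) [DecidableRel G.Adj] (v : V) : V → ℝ :=
  fun k => if k ∈ G.neighborFinset v then (G.degree v : ℝ)⁻¹ else 0

/-- The optimal transportation (Wasserstein-1) distance between two probability measures on the
vertex set of `G`, with cost given by the shortest-path distance: the infimum over all couplings
`ξ` of the total transport cost `Σ_{(k,k')} d(k,k') ξ(k,k')`. -/
noncomputable def wassersteinW1 {V : Type*} [Fintype V] [DecidableEq V]
    (G : SimpleGraph V) (μ ν : V → ℝ) : ℝ :=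
  sInf {c : ℝ | ∃ ξ : V × V → ℝ,
    (∀ p, 0 ≤ ξ p) ∧
    (∀ k, ∑ k' : V, ξ (k, k') = μ k) ∧
    (∀ k', ∑ k : V, ξ (k, k') = ν k') ∧
    c = ∑ p : V × V, (G.dist p.1 p.2 : ℝ) * ξ p}

lemma uniformNbrMeasure_nonneg {V : Type*} [Fintype V] [DecidableEq V]
    (G : SimpleGraph V) [DecidableRel G.Adj] (v k : V) :
    0 ≤ uniformNbrMeasure G v k := by
  unfold uniformNbrMeasure
  split <;> positivity

lemma sum_uniformNbrMeasure {V : Type*} [Fintype V] [DecidableEq V]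
    (G : SimpleGraph V) [DecidableRel G.Adj] (v : V) (hv : 0 < G.degree v) :
    ∑ k : V, uniformNbrMeasure G v k = 1 := by
  unfold uniformNbrMeasure
  rw [Finset.sum_ite_mem, Finset.univ_inter, Finset.sum_const,
    SimpleGraph.card_neighborFinset_eq_degree, nsmul_eq_mul]
  field_simp

/-- For an edge `(i,j)` of a graph with all degrees positive,
`W₁(m_i, m_j) ≥ 1 − T_ij · min (1/d_i) (1/d_j)`. -/
theorem wasserstein_ge_one_sub_common_neighbors
    {V : Type*} [Fintype V] [DecidableEq V]
    (G : SimpleGraph V) [DecidableRel G.Adj]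
    (hdeg : ∀ v : V, 0 < G.degree v)
    (i j : V) (hadj : G.Adj i j) :
    wassersteinW1 G (uniformNbrMeasure G i) (uniformNbrMeasure G j) ≥
      1 - ((G.neighborFinset i ∩ G.neighborFinset j).card : ℝ) *
        min (1 / (G.degree i : ℝ)) (1 / (G.degree j : ℝ)) := by
  set μ := uniformNbrMeasure G i with hμdef
  set ν := uniformNbrMeasure G j with hνdef
  apply le_csInf
  · -- product coupling shows nonemptiness
    refine ⟨_, fun p => μ p.1 * ν p.2, ?_, ?_, ?_, rfl⟩
    · intro p
      exact mul_nonneg (uniformNbrMeasure_nonneg G i _) (uniformNbrMeasure_nonneg G j _)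
    · intro k
      show ∑ k' : V, μ k * ν k' = μ k
      rw [← Finset.mul_sum, sum_uniformNbrMeasure G j (hdeg j), mul_one]
    · intro k'
      show ∑ k : V, μ k * ν k' = ν k'
      rw [← Finset.sum_mul, sum_uniformNbrMeasure G i (hdeg i), one_mul]
  · rintro c ⟨ξ, hpos, hmi, hmj, rfl⟩
    have hξμ : ∀ p : V × V, ξ p ≤ μ p.1 := by
      intro p
      rw [← hmi p.1]
      exact Finset.single_le_sum (fun k' _ => hpos (p.1, k')) (Finset.mem_univ p.2)
    have hξν : ∀ p : V × V, ξ p ≤ ν p.2 := by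
      intro p
      rw [← hmj p.2]
      exact Finset.single_le_sum (fun k _ => hpos (k, p.2)) (Finset.mem_univ p.1)
    -- total mass is 1
    have htot : ∑ p : V × V, ξ p = 1 := by
      rw [Fintype.sum_prod_type]
      simp only [hmi]
      exact sum_uniformNbrMeasure G i (hdeg i)
    -- diagonal mass bound
    have hdiag : ∑ p : V × V, (if p.1 = p.2 then ξ p else 0) ≤
        ((G.neighborFinset i ∩ G.neighborFinset j).card : ℝ) *
          min (1 / (G.degree i : ℝ)) (1 / (G.degree j : ℝ)) := by
      rw [Fintype.sum_prod_type]
      have h1 : ∀ k : V, (∑ k' : V, if k = k' then ξ (k, k') else 0) = ξ (k, k) := by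
        intro k
        simp
      rw [Finset.sum_congr rfl (fun k _ => h1 k)]
      have h2 : ∀ k : V, ξ (k, k) ≤
          if k ∈ G.neighborFinset i ∩ G.neighborFinset j then
            min (1 / (G.degree i : ℝ)) (1 / (G.degree j : ℝ)) else 0 := by
        intro k
        by_cases hk : k ∈ G.neighborFinset i ∩ G.neighborFinset j
        · simp only [hk, if_true]
          rw [Finset.mem_inter] at hk
          refine le_min ?_ ?_
          · have := hξμ (k, k)
            simp only [hμdef, uniformNbrMeasure, hk.1, if_true] at this
            rwa [one_div]
          · have := hξν (k, k)
            simp only [hνdef, uniformNbrMeasure, hk.2, if_true] at this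
            rwa [one_div]
        · simp only [hk, if_false]
          rw [Finset.mem_inter, not_and_or] at hk
          rcases hk with hk | hk
          · have := hξμ (k, k)
            simpa [hμdef, uniformNbrMeasure, hk] using this
          · have := hξν (k, k)
            simpa [hνdef, uniformNbrMeasure, hk] using this
      calc ∑ k : V, ξ (k, k) ≤ ∑ k : V,
            (if k ∈ G.neighborFinset i ∩ G.neighborFinset j then
              min (1 / (G.degree i : ℝ)) (1 / (G.degree j : ℝ)) else 0) :=
            Finset.sum_le_sum (fun k _ => h2 k)
        _ = _ := by
            rw [Finset.sum_ite_mem, Finset.univ_inter, Finset.sum_const, nsmul_eq_mul]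
    -- pointwise cost bound
    have hpt : ∀ p : V × V, ξ p - (if p.1 = p.2 then ξ p else 0) ≤
        (G.dist p.1 p.2 : ℝ) * ξ p := by
      intro p
      by_cases heq : p.1 = p.2
      · simp only [heq, if_true, sub_self]
        exact mul_nonneg (by positivity) (hpos p)
      · simp only [heq, if_false, sub_zero]
        rcases eq_or_lt_of_le (hpos p) with h0 | h0
        · rw [← h0, mul_zero]
        · -- ξ p > 0, so p.1 ∈ N(i), p.2 ∈ N(j)
          have h1 : p.1 ∈ G.neighborFinset i := by
            by_contra hc
            have := hξμ p
            simp only [hμdef, uniformNbrMeasure, hc, if_false] at this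
            linarith
          have h2 : p.2 ∈ G.neighborFinset j := by
            by_contra hc
            have := hξν p
            simp only [hνdef, uniformNbrMeasure, hc, if_false] at this
            linarith
          rw [SimpleGraph.mem_neighborFinset] at h1 h2
          have hreach : G.Reachable p.1 p.2 :=
            ((h1.symm.reachable.trans hadj.reachable).trans h2.reachable)
          have hd : 1 ≤ G.dist p.1 p.2 := by
            rw [Nat.one_le_iff_ne_zero]
            intro h
            rcases SimpleGraph.dist_eq_zero_iff_eq_or_not_reachable.mp h with h' | h'
            · exact heq h'
            · exact h' hreach
          have hd' : (1 : ℝ) ≤ (G.dist p.1 p.2 : ℝ) := by exact_mod_cast hd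
          nlinarith
    calc (1 : ℝ) - ((G.neighborFinset i ∩ G.neighborFinset j).card : ℝ) *
          min (1 / (G.degree i : ℝ)) (1 / (G.degree j : ℝ))
        ≤ ∑ p : V × V, ξ p - ∑ p : V × V, (if p.1 = p.2 then ξ p else 0) := by
          rw [htot]; linarith
      _ = ∑ p : V × V, (ξ p - (if p.1 = p.2 then ξ p else 0)) := by
          rw [Finset.sum_sub_distrib]
      _ ≤ ∑ p : V × V, (G.dist p.1 p.2 : ℝ) * ξ p :=
          Finset.sum_le_sum (fun p _ => hpt p)
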